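/- Let X be a Banach space, (x_n) a sequence in X, and I an ideal on ℕ with the Baire property. Suppose there exists t' ∈ {0,1}^ℕ such that the partial sums (∑_{i=1}^n t'(i) x_i)_n are unbounded. Then the set A(I) = {t ∈ {0,1}^ℕ : (∑_{i=1}^n t(i)x_i)_n is I-bounded} is meager in {0,1}^ℕ. (No assumption on liminf ‖x_n‖ is needed.) -/

import Mathlib

/-!
Since `univ ∉ I` while `I` contains all finite sets, `I` (viewed in `ℕ → Bool`) cannot be
comeagre in any cylinder: flipping all coordinates beyond the cylinder's length would produce two
members of `I` covering a cofinite set. Being Baire measurable, `I` is therefore meagre, and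
Talagrand's argument gives blocks `[e j, e (j + 1))` such that no member of `I` contains
infinitely many of them. So if `t` is `I`-bounded by `M`, then from some block `k` on, every
block contains an `n` with `‖∑_{i<n} t i • x i‖ ≤ M`. For fixed `M` and `k` this is a closed
condition with empty interior: after any finite prefix one may follow `t'` until the partial
sums are large and then stop, so that they stay large forever.
-/

open Filter

/-- An ideal `I` on `ℕ` has the Baire property if the corresponding set of
characteristic functions is Baire measurable in the Cantor space `ℕ → Bool`. -/
def IdealHasBaireProperty (I : Set (Set ℕ)) : Prop :=
  BaireMeasurableSet {t : ℕ → Bool | {n : ℕ | t n = true} ∈ I}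

open Set PiNat

theorem StrictMono.exists_eqOn_Ico {α : Type*} {e : ℕ → ℕ} (he : StrictMono e)
    (σ : ℕ → ℕ → α) : ∃ τ : ℕ → α, ∀ j, EqOn τ (σ j) (Ico (e j) (e (j + 1))) := by
  classical
  have hex : ∀ i, ∃ j, i < e (j + 1) := fun i => ⟨i, i.lt_succ_self.trans_le he.le_apply⟩
  refine ⟨fun i => σ (Nat.find (hex i)) i, fun j i hi => ?_⟩
  have hj : Nat.find (hex i) = j :=
    (Nat.find_eq_iff _).2 ⟨hi.2, fun k hk => not_lt.2 ((he.monotone hk).trans hi.1)⟩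
  simp only [hj]

section Cylinders

variable {E : Type*} [TopologicalSpace E] [DiscreteTopology E]

theorem PiNat.exists_cylinder_subset {U : Set (ℕ → E)} (hU : IsOpen U) {x : ℕ → E}
    (hx : x ∈ U) : ∃ n, cylinder x n ⊆ U := by
  obtain ⟨_, ⟨y, n, rfl⟩, hxy, hyU⟩ :=
    (isTopologicalBasis_cylinders fun _ => E).exists_subset_of_mem_open hx hU
  exact ⟨n, by rwa [mem_cylinder_iff_eq.1 hxy]⟩

variable [Nonempty E]

theorem exists_eqOn_Ico_mem_of_mem_cylinder {D : Set (ℕ → E)} (hDo : IsOpen D) (hDd : Dense D)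
    (n : ℕ) (L : Finset (ℕ → E)) :
    ∃ m > n, ∃ σ : ℕ → E, ∀ u ∈ L, ∀ t ∈ cylinder u n, EqOn t σ (Ico n m) → t ∈ D := by
  classical
  induction L using Finset.induction_on with
  | empty => exact ⟨n + 1, n.lt_succ_self, Classical.arbitrary _, by simp⟩
  | insert u L _ ih =>
    obtain ⟨m, hnm, σ, hσ⟩ := ih
    let q : ℕ → E := fun i => if i < n then u i else σ i
    obtain ⟨t₀, ht₀D, ht₀q⟩ :=
      hDd.exists_mem_open (isOpen_cylinder _ q m) ⟨q, self_mem_cylinder q m⟩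
    obtain ⟨p, hp⟩ := exists_cylinder_subset hDo ht₀D
    refine ⟨max m p, hnm.trans_le (le_max_left _ _), t₀, ?_⟩
    rintro v hv t ht htt₀
    rcases Finset.mem_insert.1 hv with rfl | hvL
    · refine hp fun i hi => ?_
      by_cases hin : i < n
      · rw [ht i hin, ht₀q i (hin.trans hnm)]
        exact (if_pos hin).symm
      · exact htt₀ ⟨not_lt.1 hin, hi.trans_le (le_max_right _ _)⟩
    · refine hσ v hvL t ht fun i hi => ?_
      rw [htt₀ ⟨hi.1, hi.2.trans_le (le_max_left _ _)⟩, ht₀q i hi.2]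
      exact if_neg (not_lt.2 hi.1)

variable [Finite E]

theorem exists_eqOn_Ico_mem_of_isOpen_of_dense {D : Set (ℕ → E)} (hDo : IsOpen D)
    (hDd : Dense D) (n : ℕ) : ∃ m > n, ∃ σ : ℕ → E, ∀ t, EqOn t σ (Ico n m) → t ∈ D := by
  obtain ⟨L, hL⟩ := isCompact_univ.elim_finite_subcover (fun u : ℕ → E => cylinder u n)
    (fun u => isOpen_cylinder _ u n) fun t _ => mem_iUnion.2 ⟨t, self_mem_cylinder t n⟩
  obtain ⟨m, hnm, σ, hσ⟩ := exists_eqOn_Ico_mem_of_mem_cylinder hDo hDd n L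
  refine ⟨m, hnm, σ, fun t ht => ?_⟩
  obtain ⟨u, hu, htu⟩ := mem_iUnion₂.1 (hL (mem_univ t))
  exact hσ u hu t htu ht

theorem IsMeagre.exists_blocks {A : Set (ℕ → E)} (hA : IsMeagre A) :
    ∃ e : ℕ → ℕ, StrictMono e ∧ ∃ τ : ℕ → E,
      ∀ t, (∃ᶠ j in atTop, EqOn t τ (Ico (e j) (e (j + 1)))) → t ∉ A := by
  obtain ⟨G, hGA, hG, hGd⟩ := mem_residual.1 hA
  obtain ⟨D, hDo, rfl⟩ := hG.eq_iInter_nat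
  have hforce : ∀ n k, ∃ m > n, ∃ σ : ℕ → E,
      ∀ t, EqOn t σ (Ico n m) → t ∈ ⋂ j ∈ Finset.Iic k, D j := fun n k =>
    exists_eqOn_Ico_mem_of_isOpen_of_dense (isOpen_biInter_finset fun j _ => hDo j)
      (hGd.mono fun t ht => mem_iInter₂.2 fun j _ => mem_iInter.1 ht j) n
  choose m hm σ hσ using hforce
  -- block `k` is chosen to force membership in `D 0, …, D k`
  let e : ℕ → ℕ := fun k => Nat.rec 0 (fun k ek => m ek k) k
  have he : StrictMono e := strictMono_nat_of_lt_succ fun k => hm (e k) k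
  obtain ⟨τ, hτ⟩ := he.exists_eqOn_Ico fun j => σ (e j) j
  refine ⟨e, he, τ, fun t ht htA => hGA (mem_iInter.2 fun k => ?_) htA⟩
  obtain ⟨j, hkj, htj⟩ := frequently_atTop.1 ht k
  exact mem_iInter₂.1 (hσ (e j) j t (htj.trans (hτ j))) k (Finset.mem_Iic.2 hkj)

end Cylinders

def flipFrom (p : ℕ) : (ℕ → Bool) ≃ₜ (ℕ → Bool) :=
  Homeomorph.piCongrRight fun i =>
    if i < p then Homeomorph.refl Bool else Equiv.boolNot.toHomeomorphOfDiscrete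

theorem flipFrom_apply (p : ℕ) (t : ℕ → Bool) (i : ℕ) :
    flipFrom p t i = if i < p then t i else !t i := by
  by_cases h : i < p <;> simp [flipFrom, h, Equiv.toHomeomorphOfDiscrete, Equiv.boolNot]

theorem flipFrom_mem_cylinder {p : ℕ} {t u : ℕ → Bool} (h : t ∈ cylinder u p) :
    flipFrom p t ∈ cylinder u p := fun i hi => by
  rw [flipFrom_apply, if_pos hi]
  exact h i hi

theorem setOf_true_union_setOf_flipFrom_true (p : ℕ) (t : ℕ → Bool) :
    {n | t n = true} ∪ {n | flipFrom p t n = true} ∪ Iio p = univ :=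
  eq_univ_of_forall fun n => by by_cases h : n < p <;> cases t n <;> simp [flipFrom_apply, h]

theorem IdealHasBaireProperty.isMeagre {I : Set (Set ℕ)}
    (hUnion : ∀ A B : Set ℕ, A ∈ I → B ∈ I → A ∪ B ∈ I) (hProper : (Set.univ : Set ℕ) ∉ I)
    (hFin : ∀ A : Set ℕ, A.Finite → A ∈ I) (hBP : IdealHasBaireProperty I) :
    IsMeagre {t : ℕ → Bool | {n | t n = true} ∈ I} := by
  obtain ⟨U, hU, hIU⟩ := hBP.residualEq_isOpen
  rcases U.eq_empty_or_nonempty with rfl | ⟨u, hu⟩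
  · exact eventuallyEq_empty.1 hIU
  obtain ⟨p, hp⟩ := exists_cylinder_subset hU hu
  have hIU' := eventuallyEq_set.1 hIU
  have hflip := (tendsto_residual_of_isOpenMap (flipFrom p).continuous
    (flipFrom p).isOpenMap).eventually hIU'
  obtain ⟨t, ⟨ht, hft⟩, htu⟩ := (dense_of_mem_residual (hIU'.and hflip)).exists_mem_open
    (isOpen_cylinder _ u p) ⟨u, self_mem_cylinder u p⟩
  refine absurd ?_ hProper
  rw [← setOf_true_union_setOf_flipFrom_true p t]
  exact hUnion _ _ (hUnion _ _ (ht.2 (hp htu)) (hft.2 (hp (flipFrom_mem_cylinder htu))))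
    (hFin _ (finite_Iio p))

theorem eventually_not_subset_of_mem {I : Set (Set ℕ)}
    (hSub : ∀ A B : Set ℕ, A ⊆ B → B ∈ I → A ∈ I) {B : ℕ → Set ℕ} {τ : ℕ → Bool}
    (hτ : ∀ t : ℕ → Bool, (∃ᶠ j in atTop, EqOn t τ (B j)) → {n | t n = true} ∉ I)
    {F : Set ℕ} (hF : F ∈ I) : ∀ᶠ j in atTop, ¬ B j ⊆ F := by
  classical
  by_contra h
  simp only [not_eventually, not_not] at h
  let w : ℕ → Bool := fun i => decide (i ∈ F) && τ i
  refine hτ w (h.mono fun j hj i hi => by simp [w, hj hi]) (hSub _ F (fun i hi => ?_) hF)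
  simp only [mem_ofPred_eq, Bool.and_eq_true, decide_eq_true_eq, w] at hi
  exact hi.1

section PartialSum

variable {X : Type*}

def partialSum [AddCommMonoid X] (x : ℕ → X) (t : ℕ → Bool) (n : ℕ) : X :=
  ∑ i ∈ Finset.range n, if t i then x i else 0

theorem continuous_partialSum [AddCommMonoid X] [TopologicalSpace X] [ContinuousAdd X]
    (x : ℕ → X) (n : ℕ) : Continuous fun t => partialSum x t n :=
  continuous_finsetSum _ fun i _ =>
    (continuous_of_discreteTopology (f := fun b : Bool => if b then x i else 0)).comp
      (continuous_apply i)

theorem partialSum_eq_of_mem_cylinder [AddCommMonoid X] (x : ℕ → X) {t u : ℕ → Bool} {n : ℕ}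
    (h : t ∈ cylinder u n) : partialSum x t n = partialSum x u n :=
  Finset.sum_congr rfl fun i hi => by rw [h i (Finset.mem_range.1 hi)]

variable [SeminormedAddCommGroup X] {x : ℕ → X}

theorem exists_mem_cylinder_eventually_lt_norm_partialSum {t' : ℕ → Bool}
    (hub : ¬ ∃ M : ℝ, ∀ n, ‖partialSum x t' n‖ ≤ M) (u : ℕ → Bool) (p : ℕ) (M : ℝ) :
    ∃ s ∈ cylinder u p, ∀ᶠ n in atTop, M < ‖partialSum x s n‖ := by
  set c := partialSum x u p - partialSum x t' p with hc
  have hfreq : ∃ᶠ n in atTop, M + ‖c‖ < ‖partialSum x t' n‖ := fun h => hub <| by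
    simpa [bddAbove_def] using
      (isBoundedUnder_of_eventually_le (h.mono fun _ => not_lt.1)).bddAbove_range
  obtain ⟨N, hpN, hN⟩ := frequently_atTop.1 hfreq p
  -- from `N` on, the partial sums of `s` are constantly `partialSum x t' N + c`
  let s : ℕ → Bool := fun i => if i < p then u i else if i < N then t' i else false
  have hs : s ∈ cylinder u p := fun i hi => if_pos hi
  have hsN : partialSum x s N = partialSum x t' N + c := by
    have hIco : ∑ i ∈ Finset.Ico p N, (if s i then x i else 0) =
        ∑ i ∈ Finset.Ico p N, (if t' i then x i else 0) :=
      Finset.sum_congr rfl fun i hi => by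
        simp [s, not_lt.2 (Finset.mem_Ico.1 hi).1, (Finset.mem_Ico.1 hi).2]
    rw [partialSum, partialSum, ← Finset.sum_range_add_sum_Ico _ hpN,
      ← Finset.sum_range_add_sum_Ico _ hpN, hIco, ← partialSum, ← partialSum,
      partialSum_eq_of_mem_cylinder x hs, hc]
    abel
  refine ⟨s, hs, eventually_atTop.2 ⟨N, fun n hn => ?_⟩⟩
  have hsn : partialSum x s n = partialSum x s N :=
    (Finset.sum_subset (Finset.range_subset_range.2 hn) fun i _ hi => by
      simp [s, not_lt.2 (hpN.trans (not_lt.1 (Finset.mem_range.not.1 hi))),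
        Finset.mem_range.not.1 hi]).symm
  have hnorm := norm_sub_le (partialSum x t' N + c) c
  rw [add_sub_cancel_right] at hnorm
  rw [hsn, hsN]
  linarith

def blockBoundedSet (x : ℕ → X) (e : ℕ → ℕ) (M : ℝ) (k : ℕ) : Set (ℕ → Bool) :=
  {t | ∀ j ≥ k, ∃ n ∈ Ico (e j) (e (j + 1)), ‖partialSum x t n‖ ≤ M}

theorem isClosed_blockBoundedSet (e : ℕ → ℕ) (M : ℝ) (k : ℕ) :
    IsClosed (blockBoundedSet x e M k) := by
  have : blockBoundedSet x e M k =
      ⋂ j ≥ k, ⋃ n ∈ Ico (e j) (e (j + 1)), {t | ‖partialSum x t n‖ ≤ M} := by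
    ext; simp [blockBoundedSet]
  rw [this]
  exact isClosed_biInter fun j _ => (finite_Ico _ _).isClosed_biUnion fun n _ =>
    isClosed_le (continuous_partialSum x n).norm continuous_const

theorem isNowhereDense_blockBoundedSet {e : ℕ → ℕ} (he : StrictMono e) {t' : ℕ → Bool}
    (hub : ¬ ∃ M : ℝ, ∀ n, ‖partialSum x t' n‖ ≤ M) (M : ℝ) (k : ℕ) :
    IsNowhereDense (blockBoundedSet x e M k) := by
  rw [(isClosed_blockBoundedSet e M k).isNowhereDense_iff, eq_empty_iff_forall_notMem]
  intro u hu
  obtain ⟨p, hp⟩ := exists_cylinder_subset isOpen_interior hu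
  obtain ⟨s, hs, hsM⟩ := exists_mem_cylinder_eventually_lt_norm_partialSum hub u p M
  obtain ⟨N, hN⟩ := eventually_atTop.1 hsM
  obtain ⟨n, hn, hnM⟩ := interior_subset (hp hs) (max k N) (le_max_left _ _)
  exact (hN n ((le_max_right _ _).trans (he.le_apply.trans hn.1))).not_ge hnM

theorem setOf_bounded_subset_iUnion_blockBoundedSet {I : Set (Set ℕ)} {e : ℕ → ℕ}
    (hI : ∀ F ∈ I, ∀ᶠ j in atTop, ¬ Ico (e j) (e (j + 1)) ⊆ F) :
    {t | ∃ M > (0 : ℝ), {n | M < ‖partialSum x t n‖} ∈ I} ⊆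
      ⋃ (N : ℕ) (k : ℕ), blockBoundedSet x e N k := by
  rintro t ⟨M, -, hM⟩
  obtain ⟨N, hMN⟩ := exists_nat_ge M
  obtain ⟨k, hk⟩ := eventually_atTop.1 (hI _ hM)
  refine mem_iUnion₂.2 ⟨N, k, fun j hj => ?_⟩
  obtain ⟨n, hn, hnM⟩ := not_subset.1 (hk j hj)
  exact ⟨n, hn, (not_lt.1 hnM).trans hMN⟩

end PartialSum

theorem A_ideal_meager_general
    {X : Type*} [NormedAddCommGroup X]
    (x : ℕ → X)
    (I : Set (Set ℕ))
    (hUnion : ∀ A B : Set ℕ, A ∈ I → B ∈ I → A ∪ B ∈ I)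
    (hSub : ∀ A B : Set ℕ, A ⊆ B → B ∈ I → A ∈ I)
    (hProper : (Set.univ : Set ℕ) ∉ I)
    (hFin : ∀ A : Set ℕ, A.Finite → A ∈ I)
    (hBP : IdealHasBaireProperty I)
    (t' : ℕ → Bool)
    (hub : ¬ ∃ M : ℝ, ∀ n : ℕ, ‖∑ i ∈ Finset.range n, if t' i then x i else 0‖ ≤ M) :
    IsMeagre {t : ℕ → Bool | ∃ M > (0 : ℝ),
      {n : ℕ | M < ‖∑ i ∈ Finset.range n, if t i then x i else 0‖} ∈ I} := by
  obtain ⟨e, he, τ, hτ⟩ := (hBP.isMeagre hUnion hProper hFin).exists_blocks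
  have hblocks : ∀ F ∈ I, ∀ᶠ j in atTop, ¬ Ico (e j) (e (j + 1)) ⊆ F :=
    fun F hF => eventually_not_subset_of_mem hSub hτ hF
  refine IsMeagre.mono (setOf_bounded_subset_iUnion_blockBoundedSet hblocks) ?_
  exact isMeagre_iUnion fun N => isMeagre_iUnion fun k =>
    (isNowhereDense_blockBoundedSet he hub N k).isMeagre

theorem A_ideal_meager
    {X : Type*} [NormedAddCommGroup X] [NormedSpace ℝ X] [CompleteSpace X]
    (x : ℕ → X)
    (I : Set (Set ℕ))
    (hEmpty : ∅ ∈ I)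
    (hUnion : ∀ A B : Set ℕ, A ∈ I → B ∈ I → A ∪ B ∈ I)
    (hSub : ∀ A B : Set ℕ, A ⊆ B → B ∈ I → A ∈ I)
    (hProper : (Set.univ : Set ℕ) ∉ I)
    (hFin : ∀ A : Set ℕ, A.Finite → A ∈ I)
    (hBP : IdealHasBaireProperty I)
    (t' : ℕ → Bool)
    (hub : ¬ ∃ M : ℝ, ∀ n : ℕ, ‖∑ i ∈ Finset.range n, if t' i then x i else 0‖ ≤ M) :
    IsMeagre {t : ℕ → Bool | ∃ M > (0 : ℝ),
      {n : ℕ | M < ‖∑ i ∈ Finset.range n, if t i then x i else 0‖} ∈ I} :=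
  A_ideal_meager_general x I hUnion hSub hProper hFin hBP t' hub
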